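/- Define ε_n := ω_n − √2·Γ(n + 3/2)/Γ(n + 1) for n ∈ ℕ. Then ε_n ≥ 0 for all n ∈ ℕ, and ε_n = O(1/√n) as n → ∞; that is, there exists C > 0 such that ε_n ≤ C/√n for all n ≥ 1. -/
import Mathlib


open Real

lemma le_of_sq {a b : ℝ} (ha : 0 ≤ a) (hb : 0 ≤ b) (h : a^2 ≤ b^2) : a ≤ b := by
  nlinarith [sq_nonneg (a - b), sq_nonneg (a + b)]

lemma gamma_half_sq {x : ℝ} (hx : 0 < x) :
    Gamma (x + 1/2) ^ 2 ≤ Gamma x * Gamma (x + 1) := by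
  have hc := Real.convexOn_log_Gamma
  have h := hc.2 (Set.mem_Ioi.mpr hx) (Set.mem_Ioi.mpr (by linarith : (0:ℝ) < x + 1))
      (by norm_num : (0:ℝ) ≤ 1/2) (by norm_num : (0:ℝ) ≤ 1/2) (by norm_num)
  simp only [Function.comp, smul_eq_mul] at h
  rw [show (1/2 : ℝ) * x + (1/2 : ℝ) * (x+1) = x + 1/2 by ring] at h
  have h1 : Real.log (Gamma (x+1/2)) ≤ (Real.log (Gamma x) + Real.log (Gamma (x+1)))/2 := by
    linarith
  have hg1 : 0 < Gamma x := Gamma_pos_of_pos hx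
  have hg2 : 0 < Gamma (x+1) := Gamma_pos_of_pos (by linarith)
  have hg3 : 0 < Gamma (x+1/2) := Gamma_pos_of_pos (by linarith)
  have hle := Real.exp_le_exp.mpr h1
  rw [Real.exp_log hg3] at hle
  have h2 : Real.exp ((Real.log (Gamma x) + Real.log (Gamma (x+1)))/2) ^ 2
      = Gamma x * Gamma (x+1) := by
    rw [← Real.exp_nat_mul]
    push_cast
    rw [show (2:ℝ) * ((Real.log (Gamma x) + Real.log (Gamma (x+1)))/2)
        = Real.log (Gamma x) + Real.log (Gamma (x+1)) by ring,
      Real.exp_add, Real.exp_log hg1, Real.exp_log hg2]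
  calc Gamma (x+1/2)^2 ≤ Real.exp ((Real.log (Gamma x) + Real.log (Gamma (x+1)))/2)^2 :=
        pow_le_pow_left₀ hg3.le hle 2
    _ = Gamma x * Gamma (x+1) := h2

lemma ratio_upper {x : ℝ} (hx : 0 < x) : Gamma (x + 1/2) ≤ Gamma x * Real.sqrt x := by
  have h := gamma_half_sq hx
  rw [Gamma_add_one hx.ne'] at h
  have hg1 : 0 < Gamma x := Gamma_pos_of_pos hx
  have hg3 : 0 < Gamma (x+1/2) := Gamma_pos_of_pos (by linarith)
  have hs : Real.sqrt x ^ 2 = x := Real.sq_sqrt hx.le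
  apply le_of_sq hg3.le (by positivity)
  nlinarith [h, hs]

lemma ratio_lower {x : ℝ} (hx : 0 < x) :
    x * Gamma x ≤ Gamma (x + 1/2) * Real.sqrt (x + 1/2) := by
  have h := gamma_half_sq (x := x + 1/2) (by linarith)
  rw [show x + 1/2 + 1/2 = x + 1 by ring] at h
  rw [show x + 1/2 + 1 = (x + 1/2) + 1 by ring,
    Gamma_add_one (show x + 1/2 ≠ 0 by positivity)] at h
  rw [Gamma_add_one hx.ne'] at h
  have hg : 0 < Gamma x := Gamma_pos_of_pos hx
  have hg3 : 0 < Gamma (x+1/2) := Gamma_pos_of_pos (by linarith)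
  have hs : Real.sqrt (x+1/2) ^ 2 = x + 1/2 := Real.sq_sqrt (by linarith)
  apply le_of_sq (by positivity) (by positivity)
  nlinarith [h, hs]

lemma term2_le {N : ℝ} (hN : 0 ≤ N) :
    Real.sqrt 2 * Gamma (N + 3/2) / Gamma (N + 1)
      ≤ Real.sqrt 2 * Real.sqrt (N+1) := by
  have h := ratio_upper (x := N+1) (by linarith)
  rw [show N + 1 + 1/2 = N + 3/2 by ring] at h
  have hg : 0 < Gamma (N+1) := Gamma_pos_of_pos (by linarith)
  rw [div_le_iff₀ hg]
  nlinarith [h, Real.sqrt_nonneg 2]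

lemma term2_ge {N : ℝ} (hN : 0 ≤ N) :
    2*(N+1)/Real.sqrt (2*N+3) ≤ Real.sqrt 2 * Gamma (N + 3/2) / Gamma (N + 1) := by
  have h := ratio_lower (x := N+1) (by linarith)
  rw [show N + 1 + 1/2 = N + 3/2 by ring] at h
  set q := Real.sqrt (N + 3/2) with hq
  have hq2 : q^2 = N + 3/2 := Real.sq_sqrt (by linarith)
  have hq0 : 0 < q := Real.sqrt_pos.mpr (by linarith)
  set b := Real.sqrt (2*N+3) with hbdef
  have hb2 : b^2 = 2*N+3 := Real.sq_sqrt (by linarith)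
  have hb0 : 0 < b := Real.sqrt_pos.mpr (by linarith)
  have hg : 0 < Gamma (N+1) := Gamma_pos_of_pos (by linarith)
  have hg2 : 0 < Gamma (N+3/2) := Gamma_pos_of_pos (by linarith)
  have hu : (0:ℝ) ≤ Real.sqrt 2 := Real.sqrt_nonneg 2
  have hu2 : Real.sqrt 2 ^ 2 = 2 := Real.sq_sqrt (by norm_num)
  have key : Real.sqrt 2 * b = 2 * q := by
    have h1 : (Real.sqrt 2 * b)^2 = (2*q)^2 := by
      rw [mul_pow, mul_pow, hu2, hb2, hq2]; ring
    nlinarith [hq0, hb0, mul_nonneg hu hb0.le]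
  rw [div_le_div_iff₀ hb0 hg]
  calc 2*(N+1)*Gamma (N+1) ≤ 2*(Gamma (N+3/2)*q) := by nlinarith [h]
    _ = Real.sqrt 2 * Gamma (N+3/2) * b := by rw [show Real.sqrt 2 * Gamma (N+3/2) * b = (Real.sqrt 2 * b) * Gamma (N+3/2) by ring, key]; ring

/-- The sequence `ω_n`. -/
noncomputable def omega (n : ℕ) : ℝ :=
  if Odd n then
    ((2 * (n : ℝ) + 3) / ((n : ℝ) + 1)) * Real.Gamma ((n : ℝ) / 2 + 1) /
      Real.Gamma (((n : ℝ) + 1) / 2)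
  else
    ((n : ℝ) + 1) * Real.Gamma (((n : ℝ) + 1) / 2) / Real.Gamma ((n : ℝ) / 2 + 1)

/-- The sequence `ε_n = ω_n - √2·Γ(n+3/2)/Γ(n+1)`. -/
noncomputable def eps (n : ℕ) : ℝ :=
  omega n - Real.sqrt 2 * Real.Gamma ((n : ℝ) + 3 / 2) / Real.Gamma ((n : ℝ) + 1)

set_option maxHeartbeats 1000000 in
theorem eps_nonneg_and_decay :
    (∀ n : ℕ, 0 ≤ eps n) ∧ ∃ C > 0, ∀ n : ℕ, 1 ≤ n → eps n ≤ C / Real.sqrt n := by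
  constructor
  · intro n
    unfold eps omega
    set N : ℝ := (n : ℝ) with hNdef
    have hN : (0:ℝ) ≤ N := Nat.cast_nonneg n
    have hGx : 0 < Gamma ((N+1)/2) := Gamma_pos_of_pos (by linarith)
    have hGy : 0 < Gamma (N/2+1) := Gamma_pos_of_pos (by linarith)
    have hu : (0:ℝ) ≤ Real.sqrt 2 := Real.sqrt_nonneg 2
    have hu2 : Real.sqrt 2 ^ 2 = 2 := Real.sq_sqrt (by norm_num)
    set t := Real.sqrt (N+1) with htdef
    have ht2 : t^2 = N+1 := Real.sq_sqrt (by linarith)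
    have ht0 : 0 < t := Real.sqrt_pos.mpr (by linarith)
    have h1 : Real.sqrt 2 * Gamma (N + 3/2) / Gamma (N + 1)
        ≤ Real.sqrt 2 * t := term2_le hN
    rcases Nat.even_or_odd n with he | ho
    · rw [if_neg (Nat.not_odd_iff_even.mpr he)]
      set s := Real.sqrt ((N+1)/2) with hsdef
      have hs2 : s^2 = (N+1)/2 := Real.sq_sqrt (by linarith)
      have hs0 : 0 < s := Real.sqrt_pos.mpr (by linarith)
      have hru := ratio_upper (x := (N+1)/2) (by linarith)
      rw [show (N+1)/2 + 1/2 = N/2+1 by ring] at hru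
      have key : Real.sqrt 2 * t = 2 * s := by
        have : (Real.sqrt 2 * t)^2 = (2*s)^2 := by
          rw [mul_pow, mul_pow, hu2, ht2, hs2]; ring
        nlinarith [mul_nonneg hu ht0.le, hs0]
      have h2 : Real.sqrt 2 * t ≤ (N+1) * Gamma ((N+1)/2) / Gamma (N/2+1) := by
        rw [le_div_iff₀ hGy, key]
        nlinarith [hru, hs0, hGx, hs2]
      linarith
    · rw [if_pos ho]
      have hrl := ratio_lower (x := (N+1)/2) (by linarith)
      rw [show (N+1)/2 + 1/2 = N/2+1 by ring] at hrl
      set r := Real.sqrt (N/2+1) with hrdef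
      have hr2 : r^2 = N/2+1 := Real.sq_sqrt (by linarith)
      have hr0 : 0 < r := Real.sqrt_pos.mpr (by linarith)
      have h3 : 2 * (Real.sqrt 2 * t) * r ≤ 2*N+3 := by
        apply le_of_sq (by positivity) (by linarith)
        have e : (2 * (Real.sqrt 2 * t) * r)^2 = 4 * (Real.sqrt 2 ^2 * t^2 * r^2) := by ring
        rw [e, hu2, ht2, hr2]
        nlinarith []
      have h2 : Real.sqrt 2 * t ≤ (2*N+3)/(N+1) * Gamma (N/2+1) / Gamma ((N+1)/2) := by
        rw [le_div_iff₀ hGx, div_mul_eq_mul_div, le_div_iff₀ (by linarith : (0:ℝ) < N+1)]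
        have step : Real.sqrt 2 * t * Gamma ((N+1)/2) * (N+1)
            ≤ (Real.sqrt 2 * t) * (2 * (Gamma (N/2+1) * r)) := by
          nlinarith [mul_le_mul_of_nonneg_left hrl (mul_nonneg hu ht0.le)]
        calc Real.sqrt 2 * t * Gamma ((N+1)/2) * (N+1)
            ≤ (Real.sqrt 2 * t) * (2 * (Gamma (N/2+1) * r)) := step
          _ = (2 * (Real.sqrt 2 * t) * r) * Gamma (N/2+1) := by ring
          _ ≤ (2*N+3) * Gamma (N/2+1) := by nlinarith [h3, hGy]
      linarith
  · refine ⟨3, by norm_num, ?_⟩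
    intro n hn
    unfold eps omega
    set N : ℝ := (n : ℝ) with hNdef
    have hN1 : (1:ℝ) ≤ N := by rw [hNdef]; exact_mod_cast hn
    have hN : (0:ℝ) ≤ N := by linarith
    have hGx : 0 < Gamma ((N+1)/2) := Gamma_pos_of_pos (by linarith)
    have hGy : 0 < Gamma (N/2+1) := Gamma_pos_of_pos (by linarith)
    set a := Real.sqrt N with hadef
    have ha2 : a^2 = N := Real.sq_sqrt hN
    have ha0 : 0 < a := Real.sqrt_pos.mpr (by linarith)
    set b := Real.sqrt (2*N+3) with hbdef
    have hb2 : b^2 = 2*N+3 := Real.sq_sqrt (by linarith)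
    have hb0 : 0 < b := Real.sqrt_pos.mpr (by linarith)
    have hab : N ≤ a * b := by
      apply le_of_sq hN (by positivity)
      have : (a*b)^2 = a^2 * b^2 := by ring
      rw [this, ha2, hb2]; nlinarith
    have hB := term2_ge hN
    have hsum : 3/a + 2*(N+1)/b = (3*b + 2*(N+1)*a)/(a*b) := by
      field_simp
    rcases Nat.even_or_odd n with he | ho
    · rw [if_neg (Nat.not_odd_iff_even.mpr he)]
      -- term1 ≤ 2r,  r = sqrt(N/2+1)
      have hrl := ratio_lower (x := (N+1)/2) (by linarith)
      rw [show (N+1)/2 + 1/2 = N/2+1 by ring] at hrl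
      set r := Real.sqrt (N/2+1) with hrdef
      have hr2 : r^2 = N/2+1 := Real.sq_sqrt (by linarith)
      have hr0 : 0 < r := Real.sqrt_pos.mpr (by linarith)
      have hA : (N+1) * Gamma ((N+1)/2) / Gamma (N/2+1) ≤ 2*r := by
        rw [div_le_iff₀ hGy]
        have h2 := mul_le_mul_of_nonneg_left hrl (by norm_num : (0:ℝ) ≤ 2)
        calc (N+1) * Gamma ((N+1)/2) = 2*((N+1)/2 * Gamma ((N+1)/2)) := by ring
          _ ≤ 2*(Gamma (N/2+1) * r) := h2
          _ = 2*r*Gamma (N/2+1) := by ring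
      have hC : 2*r - 2*(N+1)/b ≤ 3/a := by
        rw [sub_le_iff_le_add, hsum, le_div_iff₀ (by positivity)]
        apply le_of_sq (by positivity) (by positivity)
        have e1 : (2*r*(a*b))^2 = 4 * r^2 * a^2 * b^2 := by ring
        have e2 : (3*b + 2*(N+1)*a)^2 = 9*b^2 + 12*(N+1)*(a*b) + 4*(N+1)^2*a^2 := by ring
        rw [e1, hr2, ha2, hb2, e2, hb2, ha2]
        nlinarith [mul_le_mul_of_nonneg_left hab (show (0:ℝ) ≤ 12*(N+1) by linarith)]
      linarith
    · rw [if_pos ho]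
      have hru := ratio_upper (x := (N+1)/2) (by linarith)
      rw [show (N+1)/2 + 1/2 = N/2+1 by ring] at hru
      set s := Real.sqrt ((N+1)/2) with hsdef
      have hs2 : s^2 = (N+1)/2 := Real.sq_sqrt (by linarith)
      have hs0 : 0 < s := Real.sqrt_pos.mpr (by linarith)
      have hA : (2*N+3)/(N+1) * Gamma (N/2+1) / Gamma ((N+1)/2)
          ≤ (2*N+3)/(N+1) * s := by
        rw [div_le_iff₀ hGx]
        have h2 := mul_le_mul_of_nonneg_left hru
          (show (0:ℝ) ≤ (2*N+3)/(N+1) by positivity)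
        calc (2*N+3)/(N+1) * Gamma (N/2+1) ≤ (2*N+3)/(N+1) * (Gamma ((N+1)/2) * s) := h2
          _ = (2*N+3)/(N+1) * s * Gamma ((N+1)/2) := by ring
      have hC : (2*N+3)/(N+1) * s - 2*(N+1)/b ≤ 3/a := by
        rw [sub_le_iff_le_add, hsum, div_mul_eq_mul_div,
          div_le_div_iff₀ (by linarith : (0:ℝ) < N+1) (by positivity)]
        apply le_of_sq (by positivity) (by positivity)
        have e1 : ((2*N+3)*s*(a*b))^2 = (2*N+3)^2 * s^2 * a^2 * b^2 := by ring
        have e2 : ((3*b + 2*(N+1)*a)*(N+1))^2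
            = (N+1)^2 * (9*b^2 + 12*(N+1)*(a*b) + 4*(N+1)^2*a^2) := by ring
        rw [e1, hs2, ha2, hb2, e2, hb2, ha2]
        nlinarith [mul_le_mul_of_nonneg_left hab (show (0:ℝ) ≤ 12*(N+1)^3 by positivity),
          sq_nonneg N, hN1]
      linarith
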